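/- arXiv:1710.08190 — 4 statements merged into one kernel-verified Lean document; each statement's English description precedes it below -/
import Mathlib

section
/- The middle-third Cantor set Γ ⊂ ℝ, with the metric induced from ℝ, is (1/5)-uniformly perfect: for every a ∈ Γ and every r ∈ (0, diam Γ), the set B(a,r) \ U(a, r/5) is nonempty, where B and U denote the closed and open balls in Γ. -/
open Metric Set
open scoped ENNReal NNReal

noncomputable section

/-- A metric space is doubling if there is `N` such that every closed ball of radius `r`
can be covered by at most `N` closed balls of radius `r / 2`. -/
def IsDoubling (X : Type*) [MetricSpace X] : Prop :=
  ∃ N : ℕ, ∀ (x : X) (r : ℝ), ∃ c : Finset X, c.card ≤ N ∧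
    Metric.closedBall x r ⊆ ⋃ y ∈ c, Metric.closedBall y (r / 2)

/-- Every `δ`-chain is trivial (constant). -/
def IsUniformlyDisconnectedWith (X : Type*) [MetricSpace X] (δ : ℝ) : Prop :=
  ∀ (N : ℕ) (x : ℕ → X),
    (∀ i : ℕ, 1 ≤ i → i ≤ N → dist (x (i - 1)) (x i) ≤ δ * dist (x 0) (x N)) →
    ∀ i ≤ N, x i = x 0

def IsUniformlyDisconnected (X : Type*) [MetricSpace X] : Prop :=
  ∃ δ : ℝ, 0 < δ ∧ δ < 1 ∧ IsUniformlyDisconnectedWith X δ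

/-- `ρ`-uniform perfectness. -/
def IsUniformlyPerfectWith (X : Type*) [MetricSpace X] (ρ : ℝ) : Prop :=
  ∀ (x : X) (r : ℝ), 0 < r → r < Metric.diam (Set.univ : Set X) →
    (Metric.closedBall x r \ Metric.ball x (ρ * r)).Nonempty

def IsUniformlyPerfect (X : Type*) [MetricSpace X] : Prop :=
  ∃ ρ : ℝ, 0 < ρ ∧ ρ ≤ 1 ∧ IsUniformlyPerfectWith X ρ

/-- A metric space has type `(u, v, w) ∈ {0,1}³` (here encoded by `Bool`s) if `u = 1` exactly
when it is doubling, `v = 1` exactly when it is uniformly disconnected, and `w = 1` exactly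
when it is uniformly perfect. -/
def HasType (X : Type*) [MetricSpace X] (u v w : Bool) : Prop :=
  (IsDoubling X ↔ u = true) ∧ (IsUniformlyDisconnected X ↔ v = true) ∧
    (IsUniformlyPerfect X ↔ w = true)

/-- `S_D`: points having no doubling neighborhood. -/
def SD (X : Type*) [MetricSpace X] : Set X :=
  {x : X | ∀ s ∈ nhds x, ¬ IsDoubling ↥s}

/-- `S_UD`: points having no uniformly disconnected neighborhood. -/
def SUD (X : Type*) [MetricSpace X] : Set X :=
  {x : X | ∀ s ∈ nhds x, ¬ IsUniformlyDisconnected ↥s}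

/-- `S_UP`: points having no uniformly perfect neighborhood. -/
def SUP (X : Type*) [MetricSpace X] : Set X :=
  {x : X | ∀ s ∈ nhds x, ¬ IsUniformlyPerfect ↥s}

/-- The ternary correspondence map `T(x) = Σ_{i≥1} 2 x_i / 3^i` (indices shifted to start
at `0`). -/
def cantorT (x : ℕ → Bool) : ℝ :=
  ∑' i : ℕ, 2 * (if x i then (1 : ℝ) else 0) / 3 ^ (i + 1)

/-- A Cantor space: a topological space homeomorphic to the middle-third Cantor set
(`cantorSet` is Mathlib's middle-third Cantor set in `ℝ`). -/
def IsCantorSpace (X : Type*) [TopologicalSpace X] : Prop :=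
  Nonempty (X ≃ₜ ↥cantorSet)

/-- The first index at which `x` and `y` differ. -/
def seqV (x y : ℕ → Bool) : ℕ := sInf {n | x n ≠ y n}

-- The standard ultrametric `e(x,y) = 3^{-(v(x,y)+1)}` on `2^ℕ` (indices starting at `0`,
-- corresponding to `3^{-min{n ≥ 1 : x_n ≠ y_n}}` with indices starting at `1`).
open Classical in
def cantorE (x y : ℕ → Bool) : ℝ :=
  if x = y then 0 else (3 : ℝ)⁻¹ ^ (seqV x y + 1)

/-- A shrinking sequence: positive, non-increasing, converging to `0`. -/
def IsShrinking (α : ℕ → ℝ) : Prop :=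
  (∀ n, 0 < α n) ∧ (∀ m n : ℕ, m ≤ n → α n ≤ α m) ∧
    Filter.Tendsto α Filter.atTop (nhds 0)

-- The distance `d_α(x,y) = α (v(x,y))` associated with a sequence `α`.
open Classical in
def seqDist (α : ℕ → ℝ) (x y : ℕ → Bool) : ℝ :=
  if x = y then 0 else α (seqV x y)

lemma seqV_comm (x y : ℕ → Bool) : seqV x y = seqV y x := by
  unfold seqV
  congr 1
  ext n
  exact ne_comm

lemma seqDist_self (α : ℕ → ℝ) (x : ℕ → Bool) : seqDist α x x = 0 := by
  rw [seqDist, if_pos rfl]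

lemma seqDist_of_ne (α : ℕ → ℝ) {x y : ℕ → Bool} (h : x ≠ y) :
    seqDist α x y = α (seqV x y) := by
  rw [seqDist, if_neg h]

lemma seqDist_nonneg {α : ℕ → ℝ} (hα : ∀ n, 0 < α n) (x y : ℕ → Bool) :
    0 ≤ seqDist α x y := by
  rcases eq_or_ne x y with h | h
  · rw [h, seqDist_self]
  · rw [seqDist_of_ne α h]
    exact (hα _).le

lemma min_seqV_le {x y z : ℕ → Bool} (hxz : x ≠ z) :
    min (seqV x y) (seqV y z) ≤ seqV x z := by
  have hne : {n | x n ≠ z n}.Nonempty := by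
    rcases Function.ne_iff.mp hxz with ⟨n, hn⟩
    exact ⟨n, hn⟩
  have hmem : x (seqV x z) ≠ z (seqV x z) := Nat.sInf_mem hne
  rcases ne_or_eq (x (seqV x z)) (y (seqV x z)) with h | h
  · exact le_trans (min_le_left _ _) (Nat.sInf_le h)
  · have h' : y (seqV x z) ≠ z (seqV x z) := by rw [← h]; exact hmem
    exact le_trans (min_le_right _ _) (Nat.sInf_le h')

/-- The sequentially metrized Cantor space `(2^ℕ, d_α)` for a shrinking sequence `α`. -/
def seqMetricSpace (α : ℕ → ℝ) (hα : IsShrinking α) : MetricSpace (ℕ → Bool) where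
  dist := seqDist α
  dist_self x := seqDist_self α x
  dist_comm x y := by
    show seqDist α x y = seqDist α y x
    rcases eq_or_ne x y with h | h
    · rw [h]
    · rw [seqDist_of_ne α h, seqDist_of_ne α h.symm, seqV_comm]
  dist_triangle x y z := by
    show seqDist α x z ≤ seqDist α x y + seqDist α y z
    rcases eq_or_ne x z with hxz | hxz
    · rw [hxz, seqDist_self]
      exact add_nonneg (seqDist_nonneg hα.1 _ _) (seqDist_nonneg hα.1 _ _)
    rcases eq_or_ne x y with hxy | hxy
    · subst hxy
      rw [seqDist_self, zero_add]
    rcases eq_or_ne y z with hyz | hyz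
    · subst hyz
      rw [seqDist_self, add_zero]
    rw [seqDist_of_ne α hxz, seqDist_of_ne α hxy, seqDist_of_ne α hyz]
    have h1 : α (seqV x z) ≤ α (min (seqV x y) (seqV y z)) :=
      hα.2.1 _ _ (min_seqV_le hxz)
    rcases min_cases (seqV x y) (seqV y z) with ⟨he, _⟩ | ⟨he, _⟩
    · rw [he] at h1
      exact h1.trans (le_add_of_nonneg_right (hα.1 _).le)
    · rw [he] at h1
      exact h1.trans (le_add_of_nonneg_left (hα.1 _).le)
  eq_of_dist_eq_zero := by
    intro x y h
    by_contra hne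
    have h' : seqDist α x y = 0 := h
    rw [seqDist_of_ne α hne] at h'
    exact absurd h' (ne_of_gt (hα.1 _))

/-- The Assouad dimension of a metric space. -/
def assouadDim (X : Type*) [MetricSpace X] : ℝ≥0∞ :=
  sInf {d : ℝ≥0∞ | ∃ s : ℝ, 0 < s ∧ d = ENNReal.ofReal s ∧ ∃ K : ℝ, 0 < K ∧
    ∀ ε : ℝ, 0 < ε → ε < 2 → ∀ r : ℝ, 0 < r → ∀ x : X,
      ∃ c : Finset X, (c.card : ℝ) ≤ K * ε ^ (-s) ∧
        Metric.closedBall x r ⊆ ⋃ y ∈ c, Metric.closedBall y (ε * r)}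

/-- The Hausdorff dimension of (the whole of) a metric space. -/
def hausdorffDim (X : Type*) [MetricSpace X] : ℝ≥0∞ := dimH (Set.univ : Set X)

/-- The topology induced by a metric. -/
def metricTopology {X : Type*} (m : MetricSpace X) : TopologicalSpace X :=
  m.toPseudoMetricSpace.toUniformSpace.toTopologicalSpace

/-- `f : X → Y` is quasi-symmetric: for some self-homeomorphism `η` of `[0,∞)`,
`d(f x, f y)/d(f x, f z) ≤ η (d(x,y)/d(x,z))` for all distinct `x, y, z`. -/
def IsQuasiSymmetric {X Y : Type*} [MetricSpace X] [MetricSpace Y] (f : X → Y) : Prop :=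
  ∃ η : Homeomorph (Set.Ici (0 : ℝ)) (Set.Ici (0 : ℝ)),
    ∀ x y z : X, x ≠ y → x ≠ z → y ≠ z →
      dist (f x) (f y) / dist (f x) (f z) ≤
        (η ⟨dist x y / dist x z, div_nonneg dist_nonneg dist_nonneg⟩ : ℝ)

/-- Two metric spaces (given by explicit metric structures) are quasi-symmetrically
equivalent if there is a quasi-symmetric homeomorphism between them. -/
def QSEquiv (X Y : Type*) (mX : MetricSpace X) (mY : MetricSpace Y) : Prop :=
  ∃ f : @Homeomorph X Y (metricTopology mX) (metricTopology mY),
    @IsQuasiSymmetric X Y mX mY f.toEquiv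


/-- The `ℓ^∞`-product metric (the sup metric) on `X × Y`. -/
def prodMetric {X Y : Type*} (mX : MetricSpace X) (mY : MetricSpace Y) :
    MetricSpace (X × Y) :=
  letI := mX; letI := mY; Prod.metricSpaceMax


lemma preCantorSet_subset_unitInterval' : ∀ n, preCantorSet n ⊆ Set.Icc 0 1 := by
  intro n
  induction n with
  | zero => simp
  | succ n ih =>
    rintro x (⟨u, hu, rfl⟩ | ⟨u, hu, rfl⟩) <;>
      obtain ⟨h0, h1⟩ := ih hu <;> constructor <;> [linarith; linarith; linarith; linarith]

lemma div3_mem_cantorSet {x : ℝ} (hx : x ∈ cantorSet) : x / 3 ∈ cantorSet := by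
  rw [cantorSet, Set.mem_iInter]
  intro n
  cases n with
  | zero =>
    obtain ⟨h0, h1⟩ := cantorSet_subset_unitInterval hx
    exact ⟨by linarith, by linarith⟩
  | succ n => exact Or.inl ⟨x, Set.mem_iInter.mp hx n, rfl⟩

lemma two_add_div3_mem_cantorSet {x : ℝ} (hx : x ∈ cantorSet) : (2 + x) / 3 ∈ cantorSet := by
  rw [cantorSet, Set.mem_iInter]
  intro n
  cases n with
  | zero =>
    obtain ⟨h0, h1⟩ := cantorSet_subset_unitInterval hx
    exact ⟨by linarith, by linarith⟩
  | succ n => exact Or.inr ⟨x, Set.mem_iInter.mp hx n, rfl⟩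

lemma cantorSet_split {x : ℝ} (hx : x ∈ cantorSet) :
    ∃ u ∈ cantorSet, x = u / 3 ∨ x = (2 + u) / 3 := by
  have h1 := Set.mem_iInter.mp hx 1
  rcases h1 with ⟨u1, hu1, hx1⟩ | ⟨u1, hu1, hx1⟩
  · -- x ≤ 1/3
    obtain ⟨h0, h1⟩ := preCantorSet_subset_unitInterval' 0 hu1
    have hx3 : x ≤ 1/3 := by rw [← hx1]; linarith
    refine ⟨3 * x, ?_, Or.inl (by ring)⟩
    rw [cantorSet, Set.mem_iInter]
    intro n
    have hn := Set.mem_iInter.mp hx (n + 1)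
    rcases hn with ⟨u, hu, hxu⟩ | ⟨u, hu, hxu⟩
    · have : 3 * x = u := by rw [← hxu]; ring
      rwa [this]
    · exfalso
      obtain ⟨hu0, _⟩ := preCantorSet_subset_unitInterval' n hu
      rw [← hxu] at hx3
      linarith
  · -- x ≥ 2/3
    obtain ⟨h0, h1⟩ := preCantorSet_subset_unitInterval' 0 hu1
    have hx3 : 2/3 ≤ x := by rw [← hx1]; linarith
    refine ⟨3 * x - 2, ?_, Or.inr (by ring)⟩
    rw [cantorSet, Set.mem_iInter]
    intro n
    have hn := Set.mem_iInter.mp hx (n + 1)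
    rcases hn with ⟨u, hu, hxu⟩ | ⟨u, hu, hxu⟩
    · exfalso
      obtain ⟨_, hu1'⟩ := preCantorSet_subset_unitInterval' n hu
      rw [← hxu] at hx3
      linarith
    · have : 3 * x - 2 = u := by rw [← hxu]; ring
      rwa [this]

lemma cantorSet_companion : ∀ (n : ℕ), ∀ x ∈ cantorSet, ∃ y ∈ cantorSet,
    |x - y| = 2 / 3 ^ (n + 1) := by
  intro n
  induction n with
  | zero =>
    intro x hx
    obtain ⟨u, hu, h | h⟩ := cantorSet_split hx
    · exact ⟨(2 + u) / 3, two_add_div3_mem_cantorSet hu, by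
        rw [h]; rw [abs_of_nonpos (by linarith)]; ring_nf⟩
    · exact ⟨u / 3, div3_mem_cantorSet hu, by
        rw [h]; rw [abs_of_nonneg (by linarith)]; ring_nf⟩
  | succ n ih =>
    intro x hx
    obtain ⟨u, hu, h | h⟩ := cantorSet_split hx
    · obtain ⟨v, hv, hv2⟩ := ih u hu
      refine ⟨v / 3, div3_mem_cantorSet hv, ?_⟩
      rw [h]
      have : u / 3 - v / 3 = (u - v) / 3 := by ring
      rw [this, abs_div, abs_of_nonneg (by norm_num : (0:ℝ) ≤ 3), hv2]
      ring
    · obtain ⟨v, hv, hv2⟩ := ih u hu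
      refine ⟨(2 + v) / 3, two_add_div3_mem_cantorSet hv, ?_⟩
      rw [h]
      have : (2 + u) / 3 - (2 + v) / 3 = (u - v) / 3 := by ring
      rw [this, abs_div, abs_of_nonneg (by norm_num : (0:ℝ) ≤ 3), hv2]
      ring

theorem statement_6 : IsUniformlyPerfectWith ↥cantorSet (1 / 5) := by
  intro x r hr hrd
  -- diam ≤ 1
  have hdiam : Metric.diam (Set.univ : Set ↥cantorSet) ≤ 1 := by
    apply Metric.diam_le_of_forall_dist_le (by norm_num)
    rintro ⟨p, hp⟩ - ⟨q, hq⟩ -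
    rw [Subtype.dist_eq, Real.dist_eq]
    obtain ⟨hp0, hp1⟩ := cantorSet_subset_unitInterval hp
    obtain ⟨hq0, hq1⟩ := cantorSet_subset_unitInterval hq
    rw [abs_le]; constructor <;> linarith
  have hr1 : r < 1 := lt_of_lt_of_le hrd hdiam
  -- find minimal k with 2/3^(k+1) ≤ r
  have hex : ∃ k : ℕ, 2 / (3:ℝ) ^ (k + 1) ≤ r := by
    obtain ⟨n, hn⟩ := pow_unbounded_of_one_lt (2 / r) (by norm_num : (1:ℝ) < 3)
    refine ⟨n, ?_⟩
    have h3 : (0:ℝ) < 3 ^ (n+1) := by positivity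
    rw [div_le_iff₀ h3]
    rw [div_lt_iff₀ hr] at hn
    have : (3:ℝ) ^ n ≤ 3 ^ (n+1) := by
      apply pow_le_pow_right₀ (by norm_num) (by omega)
    nlinarith
  classical
  let k := Nat.find hex
  have hk : 2 / (3:ℝ) ^ (k + 1) ≤ r := Nat.find_spec hex
  have hk2 : r / 3 < 2 / (3:ℝ) ^ (k + 1) := by
    rcases Nat.eq_zero_or_pos k with h0 | hpos
    · rw [h0]; norm_num; linarith
    · obtain ⟨k', hk'⟩ := Nat.exists_eq_succ_of_ne_zero hpos.ne'
      rw [hk'] at hk ⊢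
      have := Nat.find_min hex (m := k') (by omega)
      push_neg at this
      have h3 : (0:ℝ) < 3 ^ (k' + 1) := by positivity
      rw [div_lt_div_iff₀ (by norm_num) (by positivity)]
      rw [lt_div_iff₀ h3] at this
      have hs : (3:ℝ) ^ (k'.succ + 1) = 3 ^ (k' + 1) * 3 := by
        rw [Nat.succ_eq_add_one]; ring
      rw [hs]
      nlinarith
  obtain ⟨y, hy, hxy⟩ := cantorSet_companion k x.1 x.2
  refine ⟨⟨y, hy⟩, ?_, ?_⟩
  · rw [Metric.mem_closedBall, Subtype.dist_eq, Real.dist_eq, abs_sub_comm, hxy]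
    exact hk
  · rw [Metric.mem_ball, Subtype.dist_eq, Real.dist_eq, abs_sub_comm, hxy]
    push_neg
    nlinarith


end
end

section
/- Let ρ ∈ (0,∞) and let X₀, X₁, …, X_n be compact subsets of ℝ (each with the metric induced from ℝ) such that (1) each X_i is ρ-uniformly perfect, (2) diam X_i = 1 for all i, and (3) the distance in ℝ between X_i and X_j equals 1 for all distinct i,j. Then the union X = X₀ ∪ … ∪ X_n, with the metric induced from ℝ, is min{1/3, ρ/4}-uniformly perfect. -/
open Metric Set
open scoped ENNReal NNReal

noncomputable section

theorem statement_10 (ρ : ℝ) (hρ : 0 < ρ) (n : ℕ) (Xs : Fin (n + 1) → Set ℝ)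
    (hcompact : ∀ i, IsCompact (Xs i))
    (hup : ∀ i, IsUniformlyPerfectWith ↥(Xs i) ρ)
    (hdiam : ∀ i, Metric.diam (Xs i) = 1)
    (hdist : ∀ i j, i ≠ j → sInf (Set.image2 (fun a b => |a - b|) (Xs i) (Xs j)) = 1) :
    IsUniformlyPerfectWith ↥(⋃ i, Xs i) (min (1 / 3) (ρ / 4)) := by
  intro x r hr hrd
  have hρ'pos : (0:ℝ) < min (1/3) (ρ/4) := lt_min (by norm_num) (by linarith)
  have hρ'13 : min (1/3 : ℝ) (ρ/4) ≤ 1/3 := min_le_left _ _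
  have hρ'ρ4 : min (1/3 : ℝ) (ρ/4) ≤ ρ/4 := min_le_right _ _
  obtain ⟨i, hxi⟩ := mem_iUnion.mp x.2
  have hdiamsub : ∀ s : Set ℝ, Metric.diam (univ : Set ↥s) = Metric.diam s := by
    intro s
    have h := (isometry_subtype_coe (s := s)).diam_image (univ : Set ↥s)
    rw [Subtype.coe_image_univ] at h
    exact h.symm
  have hne : ∀ j, (Xs j).Nonempty := by
    intro j
    by_contra h
    rw [not_nonempty_iff_eq_empty] at h
    have h2 := hdiam j
    rw [h, Metric.diam_empty] at h2
    norm_num at h2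
  have hlow : ∀ j k, j ≠ k → ∀ a ∈ Xs j, ∀ b ∈ Xs k, 1 ≤ |a - b| := by
    intro j k hjk a ha b hb
    rw [← hdist j k hjk]
    exact csInf_le ⟨0, by rintro _ ⟨a', _, b', _, rfl⟩; positivity⟩
      (mem_image2_of_mem ha hb)
  have hatt : ∀ j k, j ≠ k → ∃ a ∈ Xs j, ∃ b ∈ Xs k, |a - b| = 1 := by
    intro j k hjk
    have hc : IsCompact (Set.image2 (fun a b => |a - b|) (Xs j) (Xs k)) := by
      rw [← Set.image_uncurry_prod]
      exact ((hcompact j).prod (hcompact k)).image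
        ((continuous_fst.sub continuous_snd).abs)
    have hmem := hc.sInf_mem ((hne j).image2 (hne k))
    rw [hdist j k hjk] at hmem
    obtain ⟨a, ha, b, hb, hab⟩ := hmem
    exact ⟨a, ha, b, hb, hab⟩
  -- everything is within distance 3 of x
  have hub : ∀ y : ↥(⋃ j, Xs j), dist (y:ℝ) (x:ℝ) ≤ 3 := by
    intro y
    obtain ⟨j, hyj⟩ := mem_iUnion.mp y.2
    by_cases hji : j = i
    · subst hji
      have := Metric.dist_le_diam_of_mem (hcompact j).isBounded hyj hxi
      rw [hdiam j] at this
      linarith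
    · obtain ⟨a, ha, b, hb, hab⟩ := hatt j i hji
      have h1 : dist (y:ℝ) a ≤ 1 := by
        have := Metric.dist_le_diam_of_mem (hcompact j).isBounded hyj ha
        rwa [hdiam j] at this
      have h2 : dist a b = 1 := by rw [Real.dist_eq, hab]
      have h3 : dist b (x:ℝ) ≤ 1 := by
        have := Metric.dist_le_diam_of_mem (hcompact i).isBounded hb hxi
        rwa [hdiam i] at this
      calc dist (y:ℝ) (x:ℝ) ≤ dist (y:ℝ) a + dist a b + dist b (x:ℝ) :=
            dist_triangle4 _ _ _ _
        _ ≤ 3 := by linarith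
  rcases lt_or_ge r 2 with hr2 | hr2
  · -- use uniform perfectness inside component i with radius r/2
    have h1 : (0:ℝ) < r/2 := by linarith
    have h2 : r/2 < Metric.diam (univ : Set ↥(Xs i)) := by
      rw [hdiamsub, hdiam i]; linarith
    obtain ⟨y, hy1, hy2⟩ := hup i ⟨(x:ℝ), hxi⟩ (r/2) h1 h2
    rw [Metric.mem_closedBall] at hy1
    rw [Metric.mem_ball, not_lt] at hy2
    rw [Subtype.dist_eq] at hy1 hy2
    refine ⟨⟨(y:ℝ), mem_iUnion.2 ⟨i, y.2⟩⟩, ?_, ?_⟩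
    · rw [Metric.mem_closedBall, Subtype.dist_eq]
      simpa using hy1.trans (by linarith)
    · rw [Metric.mem_ball, not_lt, Subtype.dist_eq]
      simp only
      have : min (1/3 : ℝ) (ρ/4) * r ≤ ρ * (r/2) := by nlinarith
      linarith
  rcases le_or_gt r 3 with hr3 | hr3
  · -- 2 ≤ r ≤ 3 : use a point in another component at distance exactly 1
    by_cases hex : ∃ j : Fin (n+1), j ≠ i
    · obtain ⟨j, hj⟩ := hex
      obtain ⟨a, ha, b, hb, hab⟩ := hatt j i hj
      have hax : dist a (x:ℝ) ≤ 2 := by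
        have h2 : dist a b = 1 := by rw [Real.dist_eq, hab]
        have h3 : dist b (x:ℝ) ≤ 1 := by
          have := Metric.dist_le_diam_of_mem (hcompact i).isBounded hb hxi
          rwa [hdiam i] at this
        calc dist a (x:ℝ) ≤ dist a b + dist b (x:ℝ) := dist_triangle _ _ _
          _ ≤ 2 := by linarith
      have hax1 : 1 ≤ dist a (x:ℝ) := by
        rw [Real.dist_eq]; exact hlow j i hj a ha (x:ℝ) hxi
      refine ⟨⟨a, mem_iUnion.2 ⟨j, ha⟩⟩, ?_, ?_⟩
      · rw [Metric.mem_closedBall, Subtype.dist_eq]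
        simp only
        linarith
      · rw [Metric.mem_ball, not_lt, Subtype.dist_eq]
        simp only
        nlinarith
    · push_neg at hex
      exfalso
      have hU : (⋃ j, Xs j) = Xs i := by
        ext t
        simp only [mem_iUnion]
        constructor
        · rintro ⟨j, hjt⟩; rwa [hex j] at hjt
        · intro h; exact ⟨i, h⟩
      rw [hdiamsub, hU, hdiam i] at hrd
      linarith
  · -- r > 3 : take a pair realizing diameter > r, use the farther endpoint
    have hpair : ∃ y z : ↥(⋃ j, Xs j), r < dist y z := by
      by_contra h
      push_neg at h
      have : Metric.diam (univ : Set ↥(⋃ j, Xs j)) ≤ r :=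
        Metric.diam_le_of_forall_dist_le hr.le (fun a _ b _ => h a b)
      linarith
    obtain ⟨y, z, hyz⟩ := hpair
    have hkey : ∀ w : ↥(⋃ j, Xs j), r/2 < dist (w:ℝ) (x:ℝ) →
        (Metric.closedBall x r \ Metric.ball x (min (1/3) (ρ/4) * r)).Nonempty := by
      intro w hw
      refine ⟨w, ?_, ?_⟩
      · rw [Metric.mem_closedBall, Subtype.dist_eq]
        exact (hub w).trans (by linarith)
      · rw [Metric.mem_ball, not_lt, Subtype.dist_eq]
        nlinarith
    rw [Subtype.dist_eq] at hyz
    rcases le_total (dist (y:ℝ) (x:ℝ)) (dist (z:ℝ) (x:ℝ)) with hc | hc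
    · refine hkey z ?_
      have := dist_triangle (y:ℝ) (x:ℝ) (z:ℝ)
      rw [dist_comm (x:ℝ) (z:ℝ)] at this
      linarith
    · refine hkey y ?_
      have h1 := dist_triangle (y:ℝ) (x:ℝ) (z:ℝ)
      have h2 : dist (x:ℝ) (z:ℝ) = dist (z:ℝ) (x:ℝ) := dist_comm _ _
      linarith

end
end

section
/- There exists a metric space (X,d) whose underlying topological space is a Cantor space, such that (X,d) is not doubling, is uniformly disconnected, and is uniformly perfect (i.e., has type (0,1,1)), and such that the set S_D(X,d) of points of X having no doubling neighborhood is a singleton. -/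
open Metric Set
open scoped ENNReal NNReal

noncomputable section

/-! On `2^ℕ`, two sequences `x ≠ y` that first differ at index `v` are put at distance
`3^{-ℓ_x(v)}`, where the level `ℓ_x(v)` counts the indices below `v` other than `j, …, 2j`, for
`j` the first index with `x j = true` (so `ℓ_x(v)` depends only on `x` below `v`). This is an
ultrametric inducing the product topology, so the space is a uniformly disconnected Cantor
space; it is uniformly perfect because the level grows by at most one per index and without
bound. If the first `true` of `x` is at `n`, then `ℓ_x = n` on `n + 1, …, 2n + 1`; so the `n`
sequences with `true`s exactly at `n` and at one index of `n + 1, …, 2n` are pairwise at distance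
`3^{-n}`, and at distance `3^{-n}` from the constant sequence `false`, and no neighbourhood of
that sequence is doubling. Around any other sequence there is a cylinder on which the level
grows by exactly one per index, and there every ball is covered by two balls of a third of its
radius. -/

section General

variable {X : Type*} [MetricSpace X]

lemma IsUltrametricDist.isUniformlyDisconnectedWith [IsUltrametricDist X] {δ : ℝ} (hδ : δ < 1) :
    IsUniformlyDisconnectedWith X δ := by
  intro N x hchain
  rcases Nat.eq_zero_or_pos N with rfl | hN
  · intro i hi
    rw [Nat.le_zero.1 hi]
  set D := dist (x 0) (x N)
  have hδD : 0 ≤ δ * D := dist_nonneg.trans (hchain 1 le_rfl hN)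
  have hfrom₀ : ∀ i ≤ N, dist (x 0) (x i) ≤ δ * D := by
    intro i hi
    induction i with
    | zero => simpa using hδD
    | succ i ih =>
      exact (dist_triangle_max _ (x i) _).trans
        (max_le (ih (by omega)) (hchain (i + 1) (by omega) hi))
  have hD : D = 0 := by nlinarith [hfrom₀ N le_rfl, dist_nonneg (x := x 0) (y := x N)]
  intro i hi
  exact (dist_le_zero.1 (by simpa [hD] using hfrom₀ i hi)).symm

lemma IsUltrametricDist.not_isDoubling_of_equidistant [IsUltrametricDist X]
    (h : ∀ N : ℕ, ∃ r > 0, ∃ F : Fin (N + 1) → X, Pairwise fun i j => dist (F i) (F j) = r) :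
    ¬ IsDoubling X := by
  rintro ⟨N, hN⟩
  obtain ⟨r, hr, F, hF⟩ := h N
  obtain ⟨c, hc, hcov⟩ := hN (F 0) r
  have hcenter : ∀ i, ∃ y ∈ c, F i ∈ closedBall y (r / 2) := by
    intro i
    have hi : dist (F i) (F 0) ≤ r := by
      rcases eq_or_ne i 0 with rfl | hi
      · simpa using hr.le
      · exact (hF hi).le
    simpa using hcov (mem_closedBall.2 hi)
  choose g hgc hg using hcenter
  have hg_inj : Function.Injective g := by
    intro i j hij
    by_contra hne
    have hle : dist (F i) (F j) ≤ r / 2 :=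
      (dist_triangle_max _ (g i) _).trans
        (max_le (hg i) (by rw [hij, dist_comm]; exact hg j))
    linarith [hF hne]
  have := Finset.card_le_card_of_injOn (s := Finset.univ) g (fun i _ => hgc i) hg_inj.injOn
  simp only [Finset.card_univ, Fintype.card_fin] at this
  omega

lemma isDoubling_of_forall_pos {N : ℕ} (hN : 1 ≤ N)
    (h : ∀ (x : X) (r : ℝ), 0 < r → ∃ c : Finset X, c.card ≤ N ∧
      closedBall x r ⊆ ⋃ y ∈ c, closedBall y (r / 2)) :
    IsDoubling X := by
  refine ⟨N, fun x r => ?_⟩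
  rcases lt_or_ge 0 r with hr | hr
  · exact h x r hr
  · refine ⟨{x}, by simpa using hN, ?_⟩
    simpa using closedBall_subset_closedBall (by linarith : r ≤ r / 2)

end General

lemma exists_least_index_le {a : ℕ → ℝ} {r : ℝ} {k₀ : ℕ} (h : ∃ k ≥ k₀, a k ≤ r) :
    ∃ K ≥ k₀, a K ≤ r ∧ ∀ k, k₀ ≤ k → k < K → r < a k := by
  classical
  obtain ⟨hK₀, hK⟩ := Nat.find_spec h
  exact ⟨_, hK₀, hK, fun k hk hkK => not_le.1 fun hak => Nat.find_min h hkK ⟨hk, hak⟩⟩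

section seqV

variable {x y : ℕ → Bool}

lemma apply_seqV_ne (h : x ≠ y) : x (seqV x y) ≠ y (seqV x y) :=
  Nat.sInf_mem (Function.ne_iff.1 h)

lemma seqV_le_of_ne {n : ℕ} (h : x n ≠ y n) : seqV x y ≤ n :=
  Nat.sInf_le h

lemma eq_of_lt_seqV {i : ℕ} (h : i < seqV x y) : x i = y i :=
  not_not.1 fun hne => (seqV_le_of_ne hne).not_gt h

lemma le_seqV_of_eqOn {k : ℕ} (hne : x ≠ y) (h : ∀ i < k, x i = y i) : k ≤ seqV x y :=
  not_lt.1 fun hk => apply_seqV_ne hne (h _ hk)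

lemma seqV_eq {n : ℕ} (h : ∀ i < n, x i = y i) (hn : x n ≠ y n) : seqV x y = n :=
  (seqV_le_of_ne hn).antisymm (le_seqV_of_eqOn (fun he => hn (by rw [he])) h)

end seqV

namespace SingularCantor

def IsFirstTrue (x : ℕ → Bool) (j : ℕ) : Prop :=
  x j = true ∧ ∀ i < j, x i = false

lemma IsFirstTrue.congr {x y : ℕ → Bool} {j k : ℕ} (hx : IsFirstTrue x j) (hjk : j < k)
    (h : ∀ i < k, x i = y i) : IsFirstTrue y j :=
  ⟨h j hjk ▸ hx.1, fun i hi => h i (hi.trans hjk) ▸ hx.2 i hi⟩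

lemma exists_isFirstTrue_or (x : ℕ → Bool) (k : ℕ) :
    (∃ j < k, IsFirstTrue x j) ∨ ∀ i < k, x i = false := by
  classical
  by_cases h : ∃ i, x i = true
  · by_cases hk : Nat.find h < k
    · exact .inl ⟨_, hk, Nat.find_spec h, fun i hi => by simpa using Nat.find_min h hi⟩
    · exact .inr fun i hi => by simpa using Nat.find_min h (hi.trans_le (not_lt.1 hk))
  · exact .inr fun i _ => by simpa using not_exists.1 h i

open Classical in
def level (x : ℕ → Bool) (k : ℕ) : ℕ :=
  if h : ∃ i, i < k ∧ x i = true then Nat.find h + (k - (2 * Nat.find h + 1)) else k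

variable {x y : ℕ → Bool} {j k : ℕ}

lemma level_of_isFirstTrue (hx : IsFirstTrue x j) (hk : j < k) :
    level x k = j + (k - (2 * j + 1)) := by
  classical
  have h : ∃ i, i < k ∧ x i = true := ⟨j, hk, hx.1⟩
  have hfind : Nat.find h = j := by
    refine (Nat.find_min' h ⟨hk, hx.1⟩).antisymm (not_lt.1 fun hlt => ?_)
    simpa [hx.2 _ hlt] using (Nat.find_spec h).2
  rw [level, dif_pos h, hfind]

lemma level_of_forall_false (h : ∀ i < k, x i = false) : level x k = k := by
  rw [level, dif_neg]
  rintro ⟨i, hi, hxi⟩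
  simp [h i hi] at hxi

lemma level_zero (x : ℕ → Bool) : level x 0 = 0 :=
  level_of_forall_false fun _ h => absurd h (Nat.not_lt_zero _)

lemma level_congr (h : ∀ i < k, x i = y i) : level x k = level y k := by
  rcases exists_isFirstTrue_or x k with ⟨j, hjk, hj⟩ | hx
  · rw [level_of_isFirstTrue hj hjk, level_of_isFirstTrue (hj.congr hjk h) hjk]
  · rw [level_of_forall_false hx, level_of_forall_false fun i hi => h i hi ▸ hx i hi]

lemma level_succ_mem_Icc (x : ℕ → Bool) (k : ℕ) :
    level x (k + 1) ∈ Icc (level x k) (level x k + 1) := by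
  rw [mem_Icc]
  rcases exists_isFirstTrue_or x (k + 1) with ⟨j, hjk, hj⟩ | hx
  · rw [level_of_isFirstTrue hj hjk]
    rcases (Nat.lt_succ_iff.1 hjk).lt_or_eq with hjk' | rfl
    · rw [level_of_isFirstTrue hj hjk']
      omega
    · rw [level_of_forall_false hj.2]
      omega
  · rw [level_of_forall_false hx, level_of_forall_false fun i hi => hx i (by omega)]
    omega

lemma level_mono (x : ℕ → Bool) : Monotone (level x) :=
  monotone_nat_of_le_succ fun k => (level_succ_mem_Icc x k).1

lemma level_succ_of_isFirstTrue (hx : IsFirstTrue x j) (hk : 2 * j + 1 ≤ k) :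
    level x (k + 1) = level x k + 1 := by
  rw [level_of_isFirstTrue hx (by omega), level_of_isFirstTrue hx (by omega)]
  omega

lemma le_two_mul_level_add_one (x : ℕ → Bool) (k : ℕ) : k ≤ 2 * level x k + 1 := by
  rcases exists_isFirstTrue_or x k with ⟨j, hjk, hj⟩ | hx
  · rw [level_of_isFirstTrue hj hjk]
    omega
  · rw [level_of_forall_false hx]
    omega

def scale (x : ℕ → Bool) (k : ℕ) : ℝ := 3⁻¹ ^ level x k

lemma scale_pos (x : ℕ → Bool) (k : ℕ) : 0 < scale x k := by
  unfold scale
  positivity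

lemma scale_le_one (x : ℕ → Bool) (k : ℕ) : scale x k ≤ 1 :=
  pow_le_one₀ (by norm_num) (by norm_num)

lemma scale_zero (x : ℕ → Bool) : scale x 0 = 1 := by
  rw [scale, level_zero, pow_zero]

lemma scale_antitone (x : ℕ → Bool) : Antitone (scale x) :=
  fun _ _ h => pow_le_pow_of_le_one (by norm_num) (by norm_num) (level_mono x h)

lemma scale_congr (h : ∀ i < k, x i = y i) : scale x k = scale y k := by
  rw [scale, scale, level_congr h]

lemma scale_le_three_mul_scale_succ (x : ℕ → Bool) (k : ℕ) : scale x k ≤ 3 * scale x (k + 1) := by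
  have hle : scale x k * 3⁻¹ ≤ scale x (k + 1) :=
    (pow_succ (3⁻¹ : ℝ) _).symm.trans_le <|
      pow_le_pow_of_le_one (by norm_num) (by norm_num)
        (level_succ_mem_Icc x k).2
  linarith

lemma scale_succ_of_isFirstTrue (hx : IsFirstTrue x j) (hk : 2 * j + 1 ≤ k) :
    scale x (k + 1) = scale x k / 3 := by
  rw [scale, scale, level_succ_of_isFirstTrue hx hk, pow_succ, div_eq_mul_inv]

lemma exists_scale_le (x : ℕ → Bool) (k₀ : ℕ) {r : ℝ} (hr : 0 < r) :
    ∃ k ≥ k₀, scale x k ≤ r := by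
  obtain ⟨m, hm⟩ := exists_pow_lt_of_lt_one hr (by norm_num : (3⁻¹ : ℝ) < 1)
  refine ⟨max k₀ (2 * m + 1), le_max_left _ _, le_of_lt (lt_of_le_of_lt ?_ hm)⟩
  refine pow_le_pow_of_le_one (by norm_num) (by norm_num) ?_
  have := le_two_mul_level_add_one x (max k₀ (2 * m + 1))
  omega

open Classical in
def sdist (x y : ℕ → Bool) : ℝ := if x = y then 0 else scale x (seqV x y)

lemma sdist_self (x : ℕ → Bool) : sdist x x = 0 := if_pos rfl

lemma sdist_of_ne (h : x ≠ y) : sdist x y = scale x (seqV x y) := if_neg h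

lemma sdist_nonneg (x y : ℕ → Bool) : 0 ≤ sdist x y := by
  rcases eq_or_ne x y with rfl | h
  · rw [sdist_self]
  · exact (sdist_of_ne h).symm ▸ (scale_pos x _).le

lemma sdist_comm (x y : ℕ → Bool) : sdist x y = sdist y x := by
  rcases eq_or_ne x y with rfl | h
  · rfl
  · rw [sdist_of_ne h, sdist_of_ne h.symm, seqV_comm, scale_congr fun i hi => eq_of_lt_seqV ?_]
    rwa [seqV_comm]

lemma sdist_le_max (x y z : ℕ → Bool) : sdist x z ≤ max (sdist x y) (sdist y z) := by
  rcases eq_or_ne x z with rfl | hxz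
  · exact (sdist_self x).symm ▸ le_max_of_le_left (sdist_nonneg x y)
  rcases eq_or_ne x y with rfl | hxy
  · exact le_max_of_le_right le_rfl
  rcases eq_or_ne y z with rfl | hyz
  · exact le_max_of_le_left le_rfl
  rw [sdist_of_ne hxz, sdist_of_ne hxy, sdist_of_ne hyz]
  have hmin := min_seqV_le (y := y) hxz
  rcases le_total (seqV x y) (seqV y z) with hc | hc
  · exact le_max_of_le_left (scale_antitone x (by omega))
  · refine le_max_of_le_right ((scale_antitone x (by omega)).trans_eq (scale_congr ?_))
    exact fun i hi => eq_of_lt_seqV (hi.trans_le hc)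

end SingularCantor

-- A `def` rather than an `abbrev`, so that the product topology of `ℕ → Bool` is not found on it.
def SingularCantor : Type := ℕ → Bool

namespace SingularCantor

instance : MetricSpace SingularCantor where
  dist := sdist
  dist_self := sdist_self
  dist_comm := sdist_comm
  dist_triangle x y z := (sdist_le_max x y z).trans
    (max_le_add_of_nonneg (sdist_nonneg x y) (sdist_nonneg y z))
  eq_of_dist_eq_zero {x y} h :=
    not_not.1 fun hne => (scale_pos x _).ne' ((sdist_of_ne hne).symm.trans h)

instance : IsUltrametricDist SingularCantor := ⟨sdist_le_max⟩

variable {q x y : SingularCantor} {j k : ℕ}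

lemma dist_eq_scale (h : x ≠ y) : dist x y = scale x (seqV x y) := sdist_of_ne h

lemma dist_le_one (x y : SingularCantor) : dist x y ≤ 1 := by
  rcases eq_or_ne x y with rfl | h
  · simp
  · exact (dist_eq_scale h).trans_le (scale_le_one x _)

lemma dist_le_scale_of_eqOn (h : ∀ i < k, x i = y i) : dist x y ≤ scale x k := by
  rcases eq_or_ne x y with rfl | hne
  · simpa using (scale_pos x k).le
  · exact (dist_eq_scale hne).trans_le (scale_antitone x (le_seqV_of_eqOn hne h))

lemma eqOn_of_dist_lt (h : dist x y < scale x k) : ∀ i < k, x i = y i := by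
  rcases eq_or_ne x y with rfl | hne
  · exact fun _ _ => rfl
  · refine fun i hi => eq_of_lt_seqV (hi.trans_le (not_lt.1 fun hv => h.not_ge ?_))
    exact (scale_antitone x hv.le).trans_eq (dist_eq_scale hne).symm

def flipAt (x : SingularCantor) (k : ℕ) : SingularCantor := fun i => if i = k then !x i else x i

lemma flipAt_self (x : SingularCantor) (k : ℕ) : flipAt x k k = !x k := if_pos rfl

lemma flipAt_of_ne {i : ℕ} (h : i ≠ k) : flipAt x k i = x i := if_neg h

lemma dist_flipAt (x : SingularCantor) (k : ℕ) : dist x (flipAt x k) = scale x k := by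
  have hne : x k ≠ flipAt x k k := by simp [flipAt_self]
  rw [dist_eq_scale fun h => hne (by rw [← h]), seqV_eq (fun i hi => (flipAt_of_ne hi.ne).symm) hne]

lemma diam_univ_le_one : diam (univ : Set SingularCantor) ≤ 1 :=
  diam_le_of_forall_dist_le zero_le_one fun x _ y _ => dist_le_one x y

lemma isUniformlyPerfectWith : IsUniformlyPerfectWith SingularCantor 3⁻¹ := by
  intro x r hr hrd
  obtain ⟨K, -, hKr, hmin⟩ := exists_least_index_le (exists_scale_le x 0 hr)
  obtain ⟨k, rfl⟩ : ∃ k, K = k + 1 := Nat.exists_eq_succ_of_ne_zero fun hK => by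
    subst hK
    linarith [scale_zero x, hrd.trans_le diam_univ_le_one]
  refine ⟨flipAt x (k + 1), ?_, fun hlt => ?_⟩
  · rw [mem_closedBall, dist_comm, dist_flipAt]
    exact hKr
  · rw [mem_ball, dist_comm, dist_flipAt] at hlt
    linarith [scale_le_three_mul_scale_succ x k, hmin k k.zero_le k.lt_succ_self]

def origin : SingularCantor := fun _ => false

def cluster (n i : ℕ) : SingularCantor := fun m => decide (m = n ∨ m = n + 1 + i)

lemma isFirstTrue_cluster (n i : ℕ) : IsFirstTrue (cluster n i) n :=
  ⟨by simp [cluster], fun m hm => by simp [cluster]; omega⟩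

lemma dist_origin_cluster (n i : ℕ) : dist origin (cluster n i) = 3⁻¹ ^ n := by
  have hne : origin n ≠ cluster n i n := by simp [origin, cluster]
  have hlt : ∀ m < n, origin m = cluster n i m := fun m hm => by simp [origin, cluster]; omega
  rw [dist_eq_scale fun h => hne (by rw [h]), seqV_eq hlt hne]
  exact congrArg _ (level_of_forall_false (x := origin) fun _ _ => rfl)

lemma dist_cluster {n i i' : ℕ} (hi : i < n) (hne : i ≠ i') :
    dist (cluster n i) (cluster n i') = 3⁻¹ ^ n := by
  have hdiff : cluster n i (n + 1 + i) ≠ cluster n i' (n + 1 + i) := by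
    simp [cluster]
    omega
  have hagree : ∀ m < n + 1, cluster n i m = cluster n i' m := fun m hm => by
    simp only [cluster, decide_eq_decide]
    omega
  have hv := le_seqV_of_eqOn (fun h => hdiff (by rw [h])) hagree
  have hv' := seqV_le_of_ne hdiff
  rw [dist_eq_scale fun h => hdiff (by rw [h])]
  exact congrArg _ ((level_of_isFirstTrue (isFirstTrue_cluster n i) (by omega)).trans (by omega))

lemma exists_equidistant_mem_ball (N : ℕ) {ε : ℝ} (hε : 0 < ε) :
    ∃ r > 0, ∃ F : Fin (N + 1) → SingularCantor,
      (∀ i, F i ∈ ball origin ε) ∧ Pairwise fun i j => dist (F i) (F j) = r := by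
  obtain ⟨m, hm⟩ := exists_pow_lt_of_lt_one hε (by norm_num : (3⁻¹ : ℝ) < 1)
  set n := max (N + 1) m
  refine ⟨3⁻¹ ^ n, by positivity, fun i => cluster n i, fun i => ?_, fun i j hij => ?_⟩
  · rw [mem_ball, dist_comm, dist_origin_cluster]
    exact (pow_le_pow_of_le_one (by norm_num) (by norm_num) (le_max_right _ _)).trans_lt hm
  · exact dist_cluster (by omega) (Fin.val_injective.ne hij)

lemma not_isDoubling : ¬ IsDoubling SingularCantor :=
  IsUltrametricDist.not_isDoubling_of_equidistant fun N =>
    let ⟨r, hr, F, _, hF⟩ := exists_equidistant_mem_ball N one_pos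
    ⟨r, hr, F, hF⟩

lemma origin_mem_SD : origin ∈ SD SingularCantor := by
  intro s hs
  obtain ⟨ε, hε, hball⟩ := Metric.mem_nhds_iff.1 hs
  refine IsUltrametricDist.not_isDoubling_of_equidistant fun N => ?_
  obtain ⟨r, hr, F, hFε, hF⟩ := exists_equidistant_mem_ball N hε
  exact ⟨r, hr, fun i => ⟨F i, hball (hFε i)⟩, fun i j hij => hF hij⟩

def cylinder (q : SingularCantor) (k : ℕ) : Set SingularCantor := {z | ∀ i < k, z i = q i}

lemma cylinder_mem_nhds (q : SingularCantor) (k : ℕ) : cylinder q k ∈ nhds q :=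
  Filter.mem_of_superset (ball_mem_nhds q (scale_pos q k)) fun z hz i hi =>
    (eqOn_of_dist_lt (by rwa [mem_ball, dist_comm] at hz) i hi).symm

lemma exists_index_forall_dist_le (hq : IsFirstTrue q j) (hx : x ∈ cylinder q (2 * j + 1))
    {r : ℝ} (hr : 0 < r) :
    ∃ K ≥ 2 * j + 1, ∀ z ∈ cylinder q (2 * j + 1), dist x z ≤ r →
      dist z x ≤ r / 2 ∨ dist z (flipAt x K) ≤ r / 2 := by
  obtain ⟨K, hK, hKr, hmin⟩ := exists_least_index_le (exists_scale_le x (2 * j + 1) hr)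
  refine ⟨K, hK, fun z hz hxz => ?_⟩
  have hzx : ∀ i < K, z i = x i := by
    rcases eq_or_ne x z with rfl | hne
    · exact fun _ _ => rfl
    have hv₀ : 2 * j + 1 ≤ seqV x z :=
      le_seqV_of_eqOn hne fun i hi => (hx i hi).trans (hz i hi).symm
    have hvK : K ≤ seqV x z :=
      not_lt.1 fun hv => (hmin _ hv₀ hv).not_ge ((dist_eq_scale hne).symm.trans_le hxz)
    exact fun i hi => (eq_of_lt_seqV (hi.trans_le hvK)).symm
  have hbound : ∀ c : SingularCantor, (∀ i < K + 1, z i = c i) → dist z c ≤ r / 2 := by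
    intro c hc
    have hz₁ : IsFirstTrue z j := hq.congr (k := 2 * j + 1) (by omega) fun i hi => (hz i hi).symm
    have hsucc := scale_succ_of_isFirstTrue hz₁ hK
    have hzK : scale z K = scale x K := scale_congr hzx
    linarith [dist_le_scale_of_eqOn hc, scale_pos x K]
  by_cases hzK : z K = x K
  · refine .inl (hbound x fun i hi => ?_)
    rcases (Nat.lt_succ_iff.1 hi).lt_or_eq with hi | rfl
    exacts [hzx i hi, hzK]
  · refine .inr (hbound _ fun i hi => ?_)
    rcases (Nat.lt_succ_iff.1 hi).lt_or_eq with hi | rfl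
    · rw [flipAt_of_ne hi.ne]
      exact hzx i hi
    · rw [flipAt_self]
      exact Bool.eq_not.2 hzK

lemma isDoubling_cylinder (hq : IsFirstTrue q j) : IsDoubling (cylinder q (2 * j + 1)) := by
  classical
  refine isDoubling_of_forall_pos (N := 2) one_le_two fun ⟨x, hx⟩ r hr => ?_
  obtain ⟨K, hK, hcover⟩ := exists_index_forall_dist_le hq hx hr
  have hflip : flipAt x K ∈ cylinder q (2 * j + 1) := fun i hi => by
    rw [flipAt_of_ne (by omega)]
    exact hx i hi
  refine ⟨{⟨x, hx⟩, ⟨flipAt x K, hflip⟩}, Finset.card_le_two, fun ⟨z, hz⟩ hxz => ?_⟩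
  rw [mem_closedBall, dist_comm] at hxz
  simp only [Finset.mem_insert, Finset.mem_singleton, mem_iUnion, exists_prop, exists_eq_or_imp,
    exists_eq_left]
  exact hcover z hz hxz

lemma SD_eq : SD SingularCantor = {origin} := by
  refine eq_singleton_iff_unique_mem.2 ⟨origin_mem_SD, fun q hq => not_not.1 fun hne => ?_⟩
  -- `q` differs from `origin` at `seqV q origin`, so it has a `true` there
  obtain ⟨j, -, hj⟩ | hfalse := exists_isFirstTrue_or q (seqV q origin + 1)
  · exact hq _ (cylinder_mem_nhds q _) (isDoubling_cylinder hj)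
  · exact apply_seqV_ne hne (by simpa [origin] using hfalse _ (Nat.lt_succ_self _))

def ofFun : (ℕ → Bool) ≃ SingularCantor := Equiv.refl _

lemma continuous_ofFun : Continuous ofFun := by
  refine Metric.continuous_iff'.2 fun x ε hε => ?_
  obtain ⟨k, -, hk⟩ := exists_scale_le x 0 (half_pos hε)
  have hcyl : ∀ᶠ y in nhds x, ∀ i < k, y i = x i :=
    (Filter.eventually_all_finite (Set.finite_Iio k)).2 fun i _ =>
      (continuous_apply i).continuousAt.preimage_mem_nhds ((isOpen_discrete {x i}).mem_nhds rfl)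
  filter_upwards [hcyl] with y hy
  rw [dist_comm]
  exact (dist_le_scale_of_eqOn (x := x) (y := y) fun i hi => (hy i hi).symm).trans_lt (by linarith)

def homeomorphFun : (ℕ → Bool) ≃ₜ SingularCantor :=
  continuous_ofFun.homeoOfEquivCompactToT2

end SingularCantor

theorem statement_11 :
    ∃ (X : Type) (m : MetricSpace X),
      @IsCantorSpace X (metricTopology m) ∧
      @HasType X m false true true ∧
      ∃ p : X, @SD X m = {p} := by
  refine ⟨SingularCantor, inferInstance,
    ⟨SingularCantor.homeomorphFun.symm.trans cantorSetHomeomorphNatToBool.symm⟩,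
    ⟨iff_of_false SingularCantor.not_isDoubling Bool.false_ne_true, iff_of_true ?_ rfl,
      iff_of_true ?_ rfl⟩,
    SingularCantor.origin, SingularCantor.SD_eq⟩
  · exact ⟨2⁻¹, by norm_num, by norm_num,
      IsUltrametricDist.isUniformlyDisconnectedWith (by norm_num)⟩
  · exact ⟨3⁻¹, by norm_num, by norm_num, SingularCantor.isUniformlyPerfectWith⟩
end
end

section
/- Let α : ℕ → (0,∞) be a shrinking sequence and let d_α be the associated ultrametric on 2^ℕ = (ℕ → {0,1}). Then (2^ℕ, d_α) is uniformly perfect if and only if there exists ρ ∈ (0,1) such that for every n ∈ ℕ there exists k > n with ρ·α(n) ≤ α(k). -/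
open Metric Set
open scoped ENNReal NNReal

noncomputable section

lemma ne_update_flip (x : ℕ → Bool) (k : ℕ) : x ≠ Function.update x k (!x k) := by
  intro h
  have := congrFun h k
  simp at this

lemma seqV_update_flip (x : ℕ → Bool) (k : ℕ) :
    seqV x (Function.update x k (!x k)) = k := by
  have hset : {n | x n ≠ Function.update x k (!x k) n} = {k} := by
    ext n
    rcases eq_or_ne n k with rfl | h
    · simp
    · simp [Function.update_of_ne h, h]
  rw [seqV, hset, csInf_singleton]

theorem statement_16 (α : ℕ → ℝ) (hα : IsShrinking α) :
    @IsUniformlyPerfect (ℕ → Bool) (seqMetricSpace α hα) ↔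
      ∃ ρ : ℝ, 0 < ρ ∧ ρ < 1 ∧ ∀ n : ℕ, ∃ k : ℕ, n < k ∧ ρ * α n ≤ α k := by
  letI : MetricSpace (ℕ → Bool) := seqMetricSpace α hα
  have hdist : ∀ x y : ℕ → Bool, dist x y = seqDist α x y := fun _ _ => rfl
  have hbound : ∀ x y : ℕ → Bool, dist x y ≤ α 0 := by
    intro x y
    rcases eq_or_ne x y with rfl | h
    · rw [hdist, seqDist_self]; exact (hα.1 0).le
    · rw [hdist, seqDist_of_ne α h]; exact hα.2.1 0 _ (Nat.zero_le _)
  have hbdd : Bornology.IsBounded (Set.univ : Set (ℕ → Bool)) :=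
    Metric.isBounded_iff.mpr ⟨α 0, fun x _ y _ => hbound x y⟩
  have hdflip : ∀ (x : ℕ → Bool) (k : ℕ),
      dist (Function.update x k (!x k)) x = α k := by
    intro x k
    rw [hdist, seqDist_of_ne α (ne_update_flip x k).symm, seqV_comm, seqV_update_flip]
  have hdiam : Metric.diam (Set.univ : Set (ℕ → Bool)) = α 0 := by
    apply le_antisymm
    · exact Metric.diam_le_of_forall_dist_le (hα.1 0).le fun x _ y _ => hbound x y
    · have := Metric.dist_le_diam_of_mem hbdd
        (Set.mem_univ (Function.update (fun _ => false) 0 (!(fun _ : ℕ => false) 0)))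
        (Set.mem_univ (fun _ : ℕ => false))
      rwa [hdflip] at this
  constructor
  · rintro ⟨ρ, hρ0, hρ1, hUP⟩
    refine ⟨ρ / 2, by positivity, by linarith, fun n => ?_⟩
    rcases eq_or_lt_of_le (hα.2.1 n (n + 1) (Nat.le_succ n)) with heq | hlt
    · exact ⟨n + 1, Nat.lt_succ_self n, by rw [← heq]; nlinarith [hα.1 (n + 1)]⟩
    · set r := (α n + α (n + 1)) / 2 with hrdef
      have h1 : 0 < α (n + 1) := hα.1 _
      have h2 : 0 < α n := hα.1 _
      have hr0 : 0 < r := by positivity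
      have hrn : r < α n := by rw [hrdef]; linarith
      have hrd : r < Metric.diam (Set.univ : Set (ℕ → Bool)) := by
        rw [hdiam]; exact lt_of_lt_of_le hrn (hα.2.1 0 n (Nat.zero_le n))
      obtain ⟨y, hy1, hy2⟩ := hUP (fun _ => false) r hr0 hrd
      have hdy : dist y (fun _ => false) ≤ r := Metric.mem_closedBall.mp hy1
      have hdy2 : ρ * r ≤ dist y (fun _ => false) :=
        not_lt.mp fun h => hy2 (Metric.mem_ball.mpr h)
      have hne : y ≠ fun _ => false := by
        intro h
        rw [h, dist_self] at hdy2
        nlinarith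
      rw [hdist, seqDist_of_ne α hne] at hdy hdy2
      have hv : n < seqV y fun _ => false := by
        by_contra hcon
        push_neg at hcon
        have := hα.2.1 _ n hcon
        linarith
      exact ⟨seqV y fun _ => false, hv, by nlinarith⟩
  · rintro ⟨ρ, hρ0, hρ1, h⟩
    refine ⟨ρ, hρ0, hρ1.le, fun x r hr hrd => ?_⟩
    rw [hdiam] at hrd
    have hS : {n : ℕ | α n ≤ r}.Nonempty := by
      obtain ⟨n, hn⟩ := Metric.tendsto_atTop.mp hα.2.2 r hr
      have := hn n le_rfl
      rw [Real.dist_eq, sub_zero, abs_of_pos (hα.1 n)] at this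
      exact ⟨n, this.le⟩
    have hN : α (sInf {n : ℕ | α n ≤ r}) ≤ r := Nat.sInf_mem hS
    have hN0 : sInf {n : ℕ | α n ≤ r} ≠ 0 := by
      intro h0
      rw [h0] at hN
      linarith
    obtain ⟨m, hm⟩ := Nat.exists_eq_succ_of_ne_zero hN0
    have hmgt : r < α m := by
      by_contra h'
      push_neg at h'
      have := Nat.sInf_le (show m ∈ {n : ℕ | α n ≤ r} from h')
      omega
    obtain ⟨k, hk, hρk⟩ := h m
    have hαk : α k ≤ α (m + 1) := hα.2.1 (m + 1) k hk
    have hαN : ρ * r < α (m + 1) := by nlinarith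
    refine ⟨Function.update x (m + 1) (!x (m + 1)), ?_, ?_⟩
    · refine Metric.mem_closedBall.mpr ?_
      rw [hdflip]
      rw [hm] at hN
      exact hN
    · intro hmem
      have := Metric.mem_ball.mp hmem
      rw [hdflip] at this
      linarith

end
end
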